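/- Let U = (1/√2)·!![1, −1; 1, 1] (rotation of each qubit around the y axis by π/2) and n ≥ 1. For each b ∈ ZMod 2, averaging the conjugation by all Hadamard patterns over the rotated state σ_b yields ρ_b: (1/2^n) Σ_{k : Fin n → ZMod 2} H_k * (U^{⊗n} * σ_b * (U^{⊗n})ᴴ) * H_kᴴ = ρ_b, where U^{⊗n} = ⨂_l U. -/

import Mathlib

open Matrix Finset

/-- Parity of a bit string. -/
def parity {n : ℕ} (ν : Fin n → ZMod 2) : ZMod 2 := ∑ l, ν l

/-- Tensor product of a family of one-qubit matrices, as a matrix indexed by bit strings. -/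
def tens {n : ℕ} (A : Fin n → Matrix (ZMod 2) (ZMod 2) ℂ) :
    Matrix (Fin n → ZMod 2) (Fin n → ZMod 2) ℂ :=
  Matrix.of fun x y => ∏ l, A l (x l) (y l)

/-- The Hadamard matrix. -/
noncomputable def Hmat : Matrix (ZMod 2) (ZMod 2) ℂ :=
  (1 / Real.sqrt 2 : ℝ) • !![1, 1; 1, -1]

/-- The Hadamard pattern `H_k = ⨂_l H^{k l}`. -/
noncomputable def Hpat {n : ℕ} (k : Fin n → ZMod 2) :
    Matrix (Fin n → ZMod 2) (Fin n → ZMod 2) ℂ :=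
  tens (fun l => Hmat ^ (k l).val)

/-- Rotation of one qubit around the y axis by `π/2`. -/
noncomputable def Urot : Matrix (ZMod 2) (ZMod 2) ℂ :=
  (1 / Real.sqrt 2 : ℝ) • !![1, -1; 1, 1]

/-- `P 0 = |0⟩⟨0|`, `P 1 = |+⟩⟨+|`. -/
noncomputable def projP (b : ZMod 2) : Matrix (ZMod 2) (ZMod 2) ℂ :=
  if b = 0 then !![1, 0; 0, 0] else (1 / 2 : ℂ) • !![1, 1; 1, 1]

/-- The parity-conditioned ensemble state `σ_b`. -/
noncomputable def sigma (n : ℕ) (b : ZMod 2) :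
    Matrix (Fin n → ZMod 2) (Fin n → ZMod 2) ℂ :=
  (1 / 2 ^ (n - 1) : ℂ) •
    ∑ j ∈ Finset.univ.filter (fun j : Fin n → ZMod 2 => parity j = b),
      tens (fun l => projP (j l))

/-- The four conjugate-coding states `ψ_{ij} = H^j X^i |0⟩`. -/
noncomputable def psi (i j : ZMod 2) : ZMod 2 → ℂ :=
  if j = 0 then (if i = 0 then ![1, 0] else ![0, 1])
  else if i = 0 then (1 / Real.sqrt 2 : ℝ) • ![1, 1]
  else (1 / Real.sqrt 2 : ℝ) • ![1, -1]

/-- The rank-one projector `|ψ_{ij}⟩⟨ψ_{ij}|`. -/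
noncomputable def projQ (i j : ZMod 2) : Matrix (ZMod 2) (ZMod 2) ℂ :=
  Matrix.vecMulVec (psi i j) (star (psi i j))

/-- The ciphertext state `ρ_b` of the one-bit message `b`. -/
noncomputable def rho (n : ℕ) (b : ZMod 2) :
    Matrix (Fin n → ZMod 2) (Fin n → ZMod 2) ℂ :=
  (1 / 2 ^ (2 * n - 1) : ℂ) •
    ∑ i ∈ Finset.univ.filter (fun i : Fin n → ZMod 2 => parity i = b),
      ∑ j : Fin n → ZMod 2, tens (fun l => projQ (i l) (j l))

/-!
Conjugation by `U` sends `|0⟩ ↦ |+⟩` and `|+⟩ ↦ |1⟩`, i.e. `U P(j) U† = Q(j, j + 1)`, and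
conjugation by `H` flips the basis bit of a conjugate-coding state: `H Q(i, j) H† = Q(i, j + 1)`.
All operators involved are tensor products, so the `k`-th summand is `σ_b` with every factor
`P(j l)` replaced by `Q(j l, j l + 1 + k l)`. Averaging over `k` then runs the basis string
`j + 1 + k` over all bit strings, which is exactly the inner sum of `ρ_b`.
-/

theorem Matrix.mul_smul_sum_mul {ι m R : Type*} [Fintype m] [CommSemiring R]
    (A B : Matrix m m R) (c : R) (s : Finset ι) (f : ι → Matrix m m R) :
    A * (c • ∑ i ∈ s, f i) * B = c • ∑ i ∈ s, A * f i * B := by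
  rw [Matrix.mul_smul, Matrix.smul_mul, mul_sum, sum_mul]

theorem Matrix.mul_vecMulVec_star_mul_conjTranspose {l m R : Type*} [Fintype m] [Semiring R]
    [StarRing R] (M : Matrix l m R) (v : m → R) :
    M * vecMulVec v (star v) * Mᴴ = vecMulVec (M *ᵥ v) (star (M *ᵥ v)) := by
  rw [mul_vecMulVec, vecMulVec_mul, star_mulVec]

theorem ZMod.eq_zero_or_eq_one_of_two (z : ZMod 2) : z = 0 ∨ z = 1 := by
  revert z; decide

theorem ZMod.sum_univ_two {M : Type*} [AddCommMonoid M] (f : ZMod 2 → M) :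
    ∑ z, f z = f 0 + f 1 :=
  Fin.sum_univ_two f

theorem inv_sqrt_two_mul_self : ((√2 : ℝ) : ℂ)⁻¹ * ((√2 : ℝ) : ℂ)⁻¹ = 1 / 2 := by
  rw [← mul_inv, ← Complex.ofReal_mul, Real.mul_self_sqrt zero_le_two]
  norm_num

-- The `!![…]` and `![…]` literals in the definitions are indexed by `Fin 2`, so `simp` cannot
-- evaluate them at `ZMod 2` indices; these closed forms replace them.
theorem Hmat_apply (i j : ZMod 2) :
    Hmat i j = (1 / √2 : ℝ) • (if i = 1 ∧ j = 1 then -1 else 1 : ℂ) := by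
  fin_cases i <;> fin_cases j <;> rfl

theorem Urot_apply (i j : ZMod 2) :
    Urot i j = (1 / √2 : ℝ) • (if i = 0 ∧ j = 1 then -1 else 1 : ℂ) := by
  fin_cases i <;> fin_cases j <;> rfl

theorem projP_apply (b i j : ZMod 2) :
    projP b i j = if b = 0 then (if i = 0 ∧ j = 0 then 1 else 0) else (1 / 2 : ℂ) • 1 := by
  fin_cases b <;> fin_cases i <;> fin_cases j <;> rfl

theorem psi_apply (i j x : ZMod 2) :
    psi i j x = if j = 0 then (if x = i then 1 else 0)
      else (1 / √2 : ℝ) • (if i = 1 ∧ x = 1 then -1 else 1 : ℂ) := by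
  fin_cases i <;> fin_cases j <;> fin_cases x <;> rfl

theorem projP_eq_projQ (j : ZMod 2) : projP j = projQ 0 j := by
  ext x y
  simp only [projQ, vecMulVec_apply, Pi.star_apply, projP_apply, psi_apply]
  obtain rfl | rfl := ZMod.eq_zero_or_eq_one_of_two j <;>
  obtain rfl | rfl := ZMod.eq_zero_or_eq_one_of_two x <;>
  obtain rfl | rfl := ZMod.eq_zero_or_eq_one_of_two y <;>
  simp [inv_sqrt_two_mul_self]

theorem Urot_mulVec_psi_zero (j : ZMod 2) : Urot *ᵥ psi 0 j = psi j (j + 1) := by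
  ext x
  simp only [mulVec, dotProduct, ZMod.sum_univ_two, Urot_apply, psi_apply]
  obtain rfl | rfl := ZMod.eq_zero_or_eq_one_of_two j <;>
  obtain rfl | rfl := ZMod.eq_zero_or_eq_one_of_two x <;>
  simp [CharTwo.add_self_eq_zero, inv_sqrt_two_mul_self, ← two_mul]

theorem Hmat_mulVec_psi (i j : ZMod 2) : Hmat *ᵥ psi i j = psi i (j + 1) := by
  ext x
  simp only [mulVec, dotProduct, ZMod.sum_univ_two, Hmat_apply, psi_apply]
  obtain rfl | rfl := ZMod.eq_zero_or_eq_one_of_two i <;>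
  obtain rfl | rfl := ZMod.eq_zero_or_eq_one_of_two j <;>
  obtain rfl | rfl := ZMod.eq_zero_or_eq_one_of_two x <;>
  simp [CharTwo.add_self_eq_zero, inv_sqrt_two_mul_self, ← two_mul]

theorem Hmat_pow_mulVec_psi (i j k : ZMod 2) : Hmat ^ k.val *ᵥ psi i j = psi i (j + k) := by
  obtain rfl | rfl := ZMod.eq_zero_or_eq_one_of_two k
  · simp
  · simpa [ZMod.val_one] using Hmat_mulVec_psi i j

theorem Hmat_pow_conj_Urot_conj_projP (j k : ZMod 2) :
    Hmat ^ k.val * (Urot * projP j * Urotᴴ) * (Hmat ^ k.val)ᴴ = projQ j (j + 1 + k) := by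
  simp only [projP_eq_projQ, projQ, mul_vecMulVec_star_mul_conjTranspose, Urot_mulVec_psi_zero,
    Hmat_pow_mulVec_psi]

section Tensor

variable {n : ℕ}

theorem tens_mul (A B : Fin n → Matrix (ZMod 2) (ZMod 2) ℂ) :
    tens A * tens B = tens fun l => A l * B l := by
  ext x y
  simp only [tens, mul_apply, of_apply]
  rw [Fintype.prod_sum fun l z => A l (x l) z * B l z (y l)]
  exact sum_congr rfl fun z _ => prod_mul_distrib.symm

theorem tens_conjTranspose (A : Fin n → Matrix (ZMod 2) (ZMod 2) ℂ) :
    (tens A)ᴴ = tens fun l => (A l)ᴴ := by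
  ext x y
  simp [tens, conjTranspose_apply]

theorem tens_mul_tens_mul_conjTranspose (A B : Fin n → Matrix (ZMod 2) (ZMod 2) ℂ) :
    tens A * tens B * (tens A)ᴴ = tens fun l => A l * B l * (A l)ᴴ := by
  rw [tens_conjTranspose, tens_mul, tens_mul]

theorem Hpat_conj_rotated_sigma (b : ZMod 2) (k : Fin n → ZMod 2) :
    Hpat k * (tens (fun _ => Urot) * sigma n b * (tens (fun _ => Urot))ᴴ) * (Hpat k)ᴴ
      = (1 / 2 ^ (n - 1) : ℂ) • ∑ j ∈ univ.filter (fun j : Fin n → ZMod 2 => parity j = b),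
          tens fun l => projQ (j l) (j l + 1 + k l) := by
  simp only [sigma, Hpat, mul_smul_sum_mul, tens_mul_tens_mul_conjTranspose,
    Hmat_pow_conj_Urot_conj_projP]

theorem sum_tens_projQ_shift (j : Fin n → ZMod 2) :
    ∑ k : Fin n → ZMod 2, tens (fun l => projQ (j l) (j l + 1 + k l))
      = ∑ k : Fin n → ZMod 2, tens fun l => projQ (j l) (k l) :=
  Equiv.sum_comp (Equiv.addLeft (j + 1)) fun k => tens fun l => projQ (j l) (k l)

end Tensor

theorem hadamard_average_of_rotated_sigma_general (n : ℕ) (b : ZMod 2) :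
    (1 / 2 ^ n : ℂ) •
        ∑ k : Fin n → ZMod 2,
          Hpat k * (tens (fun _ => Urot) * sigma n b * (tens (fun _ => Urot))ᴴ) * (Hpat k)ᴴ
      = rho n b := by
  have h_exp : n + (n - 1) = 2 * n - 1 := by omega
  simp only [Hpat_conj_rotated_sigma, ← smul_sum, smul_smul]
  rw [sum_comm, div_mul_div_comm, one_mul, ← pow_add, h_exp, rho]
  simp only [sum_tens_projQ_shift]

/-- Averaging conjugation by all Hadamard patterns over the rotated state `σ_b` yields `ρ_b`. -/
theorem hadamard_average_of_rotated_sigma (n : ℕ) (hn : 1 ≤ n) (b : ZMod 2) :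
    (1 / 2 ^ n : ℂ) •
        ∑ k : Fin n → ZMod 2,
          Hpat k * (tens (fun _ => Urot) * sigma n b * (tens (fun _ => Urot))ᴴ) * (Hpat k)ᴴ
      = rho n b :=
  hadamard_average_of_rotated_sigma_general n b
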